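/- arXiv:1108.2831 — 3 statements merged into one kernel-verified Lean document; each statement's English description precedes it below -/
import Mathlib

section
/- Let R be a commutative ring, let g ≥ 3 be a natural number, let f ∈ R, and let λ_0, λ_1, …, λ_g ∈ R satisfy λ_0 = 1, λ_g^2 = 0 and λ_{g-1}^2 = 2·λ_g·λ_{g-2}. Then the degree 3g−3 part of the product Λ_g^∨(1)·Λ_g^∨(−f−1)·Λ_g^∨(f), namely the sum over all triples (a,b,c) of integers with 0 ≤ a,b,c ≤ g and a+b+c = 3g−3 of (−1)^{a+b+c}·(−f−1)^{g−b}·f^{g−c}·λ_a·λ_b·λ_c, equals (−1)^{g−1}·f·(f+1)·λ_g·λ_{g-1}·λ_{g-2}. -/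
/-- Lemma 3.1: the degree `3g-3` part of
`Λ_g^∨(1) · Λ_g^∨(-f-1) · Λ_g^∨(f)`, where `Λ_g^∨(t) = ∑ (-1)^i λ_i t^(g-i)`,
equals `(-1)^(g-1) f (f+1) λ_g λ_{g-1} λ_{g-2}`, assuming the consequences
`λ_g^2 = 0` and `λ_{g-1}^2 = 2 λ_g λ_{g-2}` of Mumford's relation. -/
theorem degree_part_of_lambda_product
    (R : Type*) [CommRing R] (g : ℕ) (hg : 3 ≤ g) (f : R) (lam : ℕ → R)
    (h0 : lam 0 = 1) (hgg : lam g ^ 2 = 0)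
    (hrel : lam (g - 1) ^ 2 = 2 * lam g * lam (g - 2)) :
    (∑ a ∈ Finset.range (g + 1), ∑ b ∈ Finset.range (g + 1),
        ∑ c ∈ Finset.range (g + 1),
          if a + b + c = 3 * g - 3 then
            (-1 : R) ^ (a + b + c) * (-f - 1) ^ (g - b) * f ^ (g - c) *
              (lam a * lam b * lam c)
          else 0) =
      (-1 : R) ^ (g - 1) * f * (f + 1) * (lam g * lam (g - 1) * lam (g - 2)) := by
  obtain ⟨n, rfl⟩ : ∃ n, g = n + 3 := ⟨g - 3, by omega⟩
  rw [show n + 3 - 1 = n + 2 by omega, show n + 3 - 2 = n + 1 by omega] at *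
  rw [show 3 * (n + 3) - 3 = 3 * n + 6 by omega]
  have hsub : Finset.Icc n (n + 3) ⊆ Finset.range (n + 3 + 1) := by
    intro x hx; simp at hx ⊢; omega
  rw [← Finset.sum_subset hsub (by
    intro a har ha
    simp only [Finset.mem_Icc, not_and, not_le] at ha
    simp only [Finset.mem_range] at har
    apply Finset.sum_eq_zero; intro b hb
    apply Finset.sum_eq_zero; intro c hc
    simp only [Finset.mem_range] at hb hc ha ⊢
    rw [if_neg (by omega)])]
  rw [Finset.sum_congr rfl (fun a ha => (Finset.sum_subset hsub (by
    intro b hbr hb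
    simp only [Finset.mem_Icc, not_and, not_le] at hb ha
    simp only [Finset.mem_range] at hbr
    apply Finset.sum_eq_zero; intro c hc
    simp only [Finset.mem_range] at hc
    rw [if_neg (by omega)])).symm)]
  rw [Finset.sum_congr rfl (fun a ha => Finset.sum_congr rfl (fun b hb => (Finset.sum_subset hsub (by
    intro c hcr hc
    simp only [Finset.mem_Icc, not_and, not_le] at hc ha hb
    simp only [Finset.mem_range] at hcr
    rw [if_neg (by omega)])).symm))]
  simp only [show Finset.Icc n (n+3) = Finset.Ico n (n+4) from (Finset.Ico_add_one_right_eq_Icc n (n+3)).symm]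
  simp only [Finset.sum_Ico_eq_sum_range, show n + 4 - n = 4 by omega]
  trans (∑ i ∈ Finset.range 4, ∑ j ∈ Finset.range 4, ∑ k ∈ Finset.range 4,
      if i + j + k = 6 then
        (-1 : R) ^ (n + i + (n + j) + (n + k)) * (-f - 1) ^ (3 - j) * f ^ (3 - k) *
          (lam (n + i) * lam (n + j) * lam (n + k))
      else 0)
  · refine Finset.sum_congr rfl fun i hi => Finset.sum_congr rfl fun j hj => Finset.sum_congr rfl fun k hk => ?_
    simp only [Finset.mem_range] at hi hj hk
    simp only [propext (show (n + i + (n + j) + (n + k) = 3 * n + 6) ↔ (i + j + k = 6) by omega),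
      show n + 3 - (n + j) = 3 - j by omega, show n + 3 - (n + k) = 3 - k by omega]
  simp only [Finset.sum_range_succ, Finset.sum_range_zero]
  norm_num
  have h1 : ((-1:R)) ^ (3 * n + 6) = (-1) ^ n := by
    rw [show 3 * n + 6 = n + 2 * (n + 3) by omega, pow_add, pow_mul]; norm_num
  have h2 : ((-1:R)) ^ (n + 2) = (-1) ^ n := by rw [pow_add]; norm_num
  rw [show n + (n + 3) + (n + 3) = 3 * n + 6 by omega,
    show n + 1 + (n + 2) + (n + 3) = 3 * n + 6 by omega,
    show n + 1 + (n + 3) + (n + 2) = 3 * n + 6 by omega,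
    show n + 2 + (n + 1) + (n + 3) = 3 * n + 6 by omega,
    show n + 2 + (n + 2) + (n + 2) = 3 * n + 6 by omega,
    show n + 2 + (n + 3) + (n + 1) = 3 * n + 6 by omega,
    show n + 3 + n + (n + 3) = 3 * n + 6 by omega,
    show n + 3 + (n + 1) + (n + 2) = 3 * n + 6 by omega,
    show n + 3 + (n + 2) + (n + 1) = 3 * n + 6 by omega,
    show n + 3 + (n + 3) + n = 3 * n + 6 by omega, h1, h2]
  linear_combination (-3 * f * (f + 1) * (-1:R) ^ n * lam n) * hgg +
    (-f * (f + 1) * (-1:R) ^ n * lam (n + 2)) * hrel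
end

section
/- Let f be a real number with −1/2 < f < 0 and set y* = −f/(1+f), so 0 < y* < 1. Then for every real r with 0 < r < min(y*, 1−y*), the circle integral ∮_{|y−y*|=r} θ(y)·Ψ̂_0(y;f) dy equals 0. Equivalently, the residue of θ(y)Ψ_0(y;f) at the ramification point y = −f/(1+f) is 0. -/
open Complex

/-- The functions `Ψ̂_n(·;f)`, defined recursively by
`Ψ̂_0(y;f) = -1/(f+(f+1)y)^2` and
`Ψ̂_n(y;f) = -(d/dy)[Ψ̂_{n-1}(y;f) · y(y+1)/(f+(f+1)y)]`. -/
noncomputable def PsiHat (f : ℂ) : ℕ → ℂ → ℂ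
  | 0 => fun y => -1 / (f + (f + 1) * y) ^ 2
  | n + 1 => fun y =>
      -deriv (fun w => PsiHat f n w * (w * (w + 1) / (f + (f + 1) * w))) y

/-- The primitive `θ(y) = (f/2)(log y)^2 + (log y)·log(1+y) + Li₂(-y)`,
with `log` the principal branch and `Li₂(w) = ∑_{k≥1} w^k/k^2`. -/
noncomputable def theta (f : ℂ) (y : ℂ) : ℂ :=
  f / 2 * Complex.log y ^ 2 + Complex.log y * Complex.log (1 + y) +
    ∑' k : ℕ, (-y) ^ (k + 1) / ((k : ℂ) + 1) ^ 2

/-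
The pole of `Ψ̂_0` is the critical point of `θ`: since
`θ'(y) = log y · (f + (f+1)y) / (y(y+1))` and `Ψ̂_0(y) = -(1+f)⁻² (y - y*)⁻²`,
the Cauchy formula for the first derivative turns the circle integral
into `-(1+f)⁻² · 2πi · θ'(y*) = 0`.
-/

open Metric

lemma hasDerivAt_dilog_series {w : ℂ} (hw : ‖w‖ < 1) (hw₀ : w ≠ 0) :
    HasDerivAt (fun z : ℂ => ∑' k : ℕ, z ^ (k + 1) / ((k : ℂ) + 1) ^ 2)
      (-log (1 - w) / w) w := by
  obtain ⟨ρ, hwρ, hρ⟩ := exists_between hw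
  have hk (k : ℕ) : (k : ℂ) + 1 ≠ 0 := Nat.cast_add_one_ne_zero k
  have hderiv := hasDerivAt_tsum_of_isPreconnected (t := ball 0 ρ) (u := fun k : ℕ => ρ ^ k)
    (g' := fun (k : ℕ) (z : ℂ) => z ^ k / ((k : ℂ) + 1))
    (summable_geometric_of_lt_one (norm_nonneg w |>.trans hwρ.le) hρ) isOpen_ball
    (convex_ball _ _).isPreconnected
    (fun k z _ => by
      refine ((hasDerivAt_pow (k + 1) z).div_const (((k : ℂ) + 1) ^ 2)).congr_deriv ?_
      rw [Nat.add_sub_cancel]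
      push_cast
      field_simp [hk k])
    (fun k z hz => by
      rw [mem_ball_zero_iff] at hz
      rw [norm_div, norm_pow, ← Nat.cast_add_one, Complex.norm_natCast]
      exact (div_le_self (by positivity) (by exact_mod_cast k.succ_pos)).trans (by gcongr))
    (mem_ball_self (norm_nonneg w |>.trans_lt hwρ)) (by simp)
    (mem_ball_zero_iff.mpr hwρ)
  have hsum : ∑' k : ℕ, w ^ k / ((k : ℂ) + 1) = -log (1 - w) / w := by
    rw [eq_div_iff hw₀, ← (hasSum_taylorSeries_neg_log' hw).tsum_eq, ← tsum_mul_right]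
    congr 1 with k
    ring
  rwa [hsum] at hderiv

lemma hasDerivAt_theta (f : ℂ) {y : ℂ} (hy : y ∈ slitPlane) (hy₁ : ‖y‖ < 1) :
    HasDerivAt (theta f) (log y * (f + (f + 1) * y) / (y * (y + 1))) y := by
  have hy₀ : y ≠ 0 := slitPlane_ne_zero hy
  have hy₁' : 1 + y ∈ slitPlane := mem_slitPlane_of_norm_lt_one hy₁
  have hlog₁ : HasDerivAt (fun z => log (1 + z)) (1 + y)⁻¹ y :=
    (hasDerivAt_log hy₁').comp_const_add 1 y
  have hdilog : HasDerivAt (fun z : ℂ => ∑' k : ℕ, (-z) ^ (k + 1) / ((k : ℂ) + 1) ^ 2)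
      (-log (1 + y) / y) y := by
    refine ((hasDerivAt_dilog_series (w := -y) (by simpa) (neg_ne_zero.mpr hy₀)).comp y
      (hasDerivAt_neg y)).congr_deriv ?_
    rw [sub_neg_eq_add]
    field_simp
  have hlog := hasDerivAt_log hy
  refine (((hlog.pow 2).const_mul (f / 2)).add (hlog.mul hlog₁) |>.add hdilog).congr_deriv ?_
  rw [add_comm y 1]
  field_simp [slitPlane_ne_zero hy₁']
  ring

lemma differentiableOn_theta (f : ℂ) : DifferentiableOn ℂ (theta f) (slitPlane ∩ ball 0 1) :=
  fun _ hy ↦ (hasDerivAt_theta f hy.1 (mem_ball_zero_iff.mp hy.2)).differentiableAt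
    |>.differentiableWithinAt

lemma deriv_theta_eq_zero {f y : ℂ} (hy : y ∈ slitPlane) (hy₁ : ‖y‖ < 1)
    (hcrit : f + (f + 1) * y = 0) : deriv (theta f) y = 0 := by
  rw [(hasDerivAt_theta f hy hy₁).deriv, hcrit, mul_zero, zero_div]

lemma psiHat_zero_eq {f : ℂ} (hf : 1 + f ≠ 0) (y : ℂ) :
    PsiHat f 0 y = -((1 + f) ^ 2)⁻¹ * (1 / (y - -f / (1 + f)) ^ 2) := by
  have hfactor : f + (f + 1) * y = (1 + f) * (y - -f / (1 + f)) := by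
    field_simp
    ring
  simp only [PsiHat, hfactor, mul_pow, one_div, neg_div, mul_inv, neg_mul]

lemma closedBall_ofReal_subset_slitPlane_inter_ball {x r : ℝ} (hr : r < x) (hr₁ : r < 1 - x) :
    closedBall (x : ℂ) r ⊆ slitPlane ∩ ball 0 1 := by
  intro y hy
  rw [mem_closedBall, dist_eq] at hy
  refine ⟨Or.inl ?_, ?_⟩
  · have := (abs_le.mp ((abs_re_le_norm (y - x)).trans hy)).1
    simp only [sub_re, ofReal_re] at this
    linarith
  · rw [mem_ball_zero_iff]
    calc ‖y‖ ≤ ‖y - x‖ + ‖(x : ℂ)‖ := norm_le_norm_sub_add y x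
      _ < 1 := by
        rw [norm_real, Real.norm_of_nonneg (by linarith [(norm_nonneg _).trans hy])]
        linarith

theorem residue_theta_psi_zero_general
    (f : ℝ) (hf₁ : -1/2 < f) (r : ℝ) (hr : 0 < r)
    (hr' : r < min (-f / (1 + f)) (1 - -f / (1 + f))) :
    (∮ y in C(((-f / (1 + f) : ℝ) : ℂ), r),
        theta (f : ℂ) y * PsiHat (f : ℂ) 0 y) = 0 := by
  have hf : (1 + f : ℂ) ≠ 0 := by exact_mod_cast (by linarith : 1 + f ≠ 0)
  set c : ℂ := ((-f / (1 + f) : ℝ) : ℂ)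
  have hc : c = -f / (1 + f) := by push_cast [c]; rfl
  obtain ⟨hrc, hrc₁⟩ := lt_min_iff.mp hr'
  have hball := closedBall_ofReal_subset_slitPlane_inter_ball hrc hrc₁
  have hθ : DiffContOnCl ℂ (theta f) (ball c r) :=
    ((differentiableOn_theta f).mono (closure_ball_subset_closedBall.trans hball)).diffContOnCl
  have hcrit : (f : ℂ) + (f + 1) * c = 0 := by
    rw [hc]
    field_simp
    ring
  obtain ⟨hc_slit, hc_ball⟩ := hball (mem_closedBall_self hr.le)
  calc (∮ y in C(c, r), theta f y * PsiHat f 0 y)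
      = ∮ y in C(c, r), -((1 + (f : ℂ)) ^ 2)⁻¹ • ((1 / (y - c) ^ 2) • theta f y) := by
        simp only [psiHat_zero_eq hf, hc, smul_eq_mul]
        congr with y
        ring
    _ = -((1 + (f : ℂ)) ^ 2)⁻¹ • ((2 * Real.pi * I) • deriv (theta f) c) := by
        rw [circleIntegral.integral_smul, hθ.deriv_eq_smul_circleIntegral hr]
    _ = 0 := by
        rw [deriv_theta_eq_zero hc_slit (mem_ball_zero_iff.mp hc_ball) hcrit, smul_zero, smul_zero]

/-- Lemma 3.2, `n = 0` case: the residue of `θ(y)Ψ_0(y;f)` at the ramification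
point `y* = -f/(1+f)` vanishes, i.e. the circle integral of `θ · Ψ̂_0` around
any sufficiently small circle centered at `y*` is `0`. -/
theorem residue_theta_psi_zero
    (f : ℝ) (hf₁ : -1/2 < f) (hf₂ : f < 0) (r : ℝ) (hr : 0 < r)
    (hr' : r < min (-f / (1 + f)) (1 - -f / (1 + f))) :
    (∮ y in C(((-f / (1 + f) : ℝ) : ℂ), r),
        theta (f : ℂ) y * PsiHat (f : ℂ) 0 y) = 0 :=
  residue_theta_psi_zero_general f hf₁ r hr hr'
end

section
/- Fix f ∈ ℂ with f ≠ 0 and f ≠ −1. For every natural number n ≥ 0 there exists a polynomial Q_n ∈ ℂ[X] with deg Q_n ≤ 2n such that for every y ∈ ℂ with y(y+1)(f+(f+1)y) ≠ 0, one has Ψ̂_n(y;f) = Q_n(y)/(f+(f+1)y)^{2n+2}. -/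
open Complex

/-!
By induction, `Ψ̂_n = Q_n / D^(2n+2)` with `D = f + (f+1)y`: multiplying by `y(y+1)/D` gives
`P / D^(2n+3)` with `P = Q_n·y(y+1)` of degree `≤ 2n+2`, and the quotient rule turns this into
`-(P'D - (2n+3)D'P) / D^(2n+4)`, whose numerator again has degree `≤ 2n+2` since `deg D ≤ 1`.
-/

open Polynomial

namespace Polynomial

/-- The numerator of the derivative of `P / D^(k+1)` over `D^(k+2)`. -/
noncomputable def divPowDerivNum {R : Type*} [CommRing R] (P D : R[X]) (k : ℕ) : R[X] :=
  derivative P * D - C ((k + 1 : ℕ) : R) * derivative D * P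

theorem natDegree_divPowDerivNum_le {R : Type*} [CommRing R] {P D : R[X]} {m : ℕ} (k : ℕ)
    (hP : P.natDegree ≤ m) (hD : D.natDegree ≤ 1) : (divPowDerivNum P D k).natDegree ≤ m := by
  have hD' : (derivative D).natDegree = 0 := by
    have := natDegree_derivative_le D
    omega
  have hP'D : (derivative P * D).natDegree ≤ m := by
    rcases Nat.eq_zero_or_pos P.natDegree with hP0 | hP0
    · simp [derivative_of_natDegree_zero hP0]
    · have := natDegree_derivative_le P
      have := natDegree_mul_le (p := derivative P) (q := D)
      omega
  have hD'P : (C ((k + 1 : ℕ) : R) * derivative D * P).natDegree ≤ m := by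
    have := natDegree_mul_le (p := C ((k + 1 : ℕ) : R) * derivative D) (q := P)
    have := natDegree_mul_le (p := C ((k + 1 : ℕ) : R)) (q := derivative D)
    have := natDegree_C ((k + 1 : ℕ) : R)
    omega
  exact (natDegree_sub_le _ _).trans (max_le hP'D hD'P)

theorem hasDerivAt_eval_div_eval_pow {𝕜 : Type*} [NontriviallyNormedField 𝕜] (P D : 𝕜[X])
    (k : ℕ) {y : 𝕜} (hy : D.eval y ≠ 0) :
    HasDerivAt (fun w => P.eval w / D.eval w ^ (k + 1))
      ((divPowDerivNum P D k).eval y / D.eval y ^ (k + 2)) y := by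
  refine ((P.hasDerivAt y).fun_div ((D.hasDerivAt y).fun_pow (k + 1))
    (pow_ne_zero _ hy)).congr_deriv ?_
  simp only [divPowDerivNum, eval_sub, eval_mul, eval_C]
  field_simp
  push_cast
  ring

end Polynomial

noncomputable def psiDen (f : ℂ) : ℂ[X] := C f + C (f + 1) * X

@[simp]
theorem eval_psiDen (f y : ℂ) : (psiDen f).eval y = f + (f + 1) * y := by
  simp [psiDen]

theorem natDegree_psiDen_le (f : ℂ) : (psiDen f).natDegree ≤ 1 := by
  unfold psiDen
  compute_degree

/-- The numerator `Q_n` of `Ψ̂_n` over `(f + (f+1)y)^(2n+2)`. -/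
noncomputable def psiNum (f : ℂ) : ℕ → ℂ[X]
  | 0 => C (-1)
  | n + 1 => -divPowDerivNum (psiNum f n * (X * (X + 1))) (psiDen f) (2 * n + 2)

theorem natDegree_psiNum_le (f : ℂ) (n : ℕ) : (psiNum f n).natDegree ≤ 2 * n := by
  induction n with
  | zero => simp [psiNum]
  | succ n ih =>
    have hP : (psiNum f n * (X * (X + 1))).natDegree ≤ 2 * (n + 1) := by
      have := natDegree_mul_le (p := psiNum f n) (q := X * (X + 1 : ℂ[X]))
      have : (X * (X + 1 : ℂ[X])).natDegree ≤ 2 := by compute_degree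
      omega
    rw [psiNum, natDegree_neg]
    exact natDegree_divPowDerivNum_le _ hP (natDegree_psiDen_le f)

theorem psiHat_eq_eval_psiNum_div (f : ℂ) (n : ℕ) {y : ℂ} (hy : f + (f + 1) * y ≠ 0) :
    PsiHat f n y = (psiNum f n).eval y / (f + (f + 1) * y) ^ (2 * n + 2) := by
  induction n generalizing y with
  | zero => simp [PsiHat, psiNum, div_eq_mul_inv]
  | succ n ih =>
    have hopen : IsOpen {w : ℂ | f + (f + 1) * w ≠ 0} :=
      isOpen_ne_fun (by fun_prop) continuous_const
    have hlocal : (fun w => PsiHat f n w * (w * (w + 1) / (f + (f + 1) * w))) =ᶠ[nhds y]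
        fun w => (psiNum f n * (X * (X + 1))).eval w / (psiDen f).eval w ^ (2 * n + 2 + 1) := by
      filter_upwards [hopen.mem_nhds hy] with w hw
      rw [ih hw, eval_psiDen, eval_mul, div_mul_div_comm, ← pow_succ]
      simp
    have hderiv := hasDerivAt_eval_div_eval_pow (psiNum f n * (X * (X + 1))) (psiDen f)
      (2 * n + 2) (y := y) (by simpa using hy)
    change -deriv _ y = _
    rw [hlocal.deriv_eq, hderiv.deriv, psiNum, eval_neg, eval_psiDen, neg_div]
    ring_nf

theorem psiHat_eq_poly_div_general
    (f : ℂ) (n : ℕ) :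
    ∃ Q : Polynomial ℂ, Q.degree ≤ (2 * n : ℕ) ∧
      ∀ y : ℂ, y * (y + 1) * (f + (f + 1) * y) ≠ 0 →
        PsiHat f n y = Q.eval y / (f + (f + 1) * y) ^ (2 * n + 2) :=
  ⟨psiNum f n, degree_le_of_natDegree_le (natDegree_psiNum_le f n),
    fun _ hy => psiHat_eq_eval_psiNum_div f n (right_ne_zero_of_mul hy)⟩

/-- Structural form of `Ψ̂_n`: for each `n` there is a polynomial `Q_n` of
degree at most `2n` with `Ψ̂_n(y;f) = Q_n(y)/(f+(f+1)y)^(2n+2)` wherever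
`y(y+1)(f+(f+1)y) ≠ 0`. -/
theorem psiHat_eq_poly_div
    (f : ℂ) (hf0 : f ≠ 0) (hf1 : f ≠ -1) (n : ℕ) :
    ∃ Q : Polynomial ℂ, Q.degree ≤ (2 * n : ℕ) ∧
      ∀ y : ℂ, y * (y + 1) * (f + (f + 1) * y) ≠ 0 →
        PsiHat f n y = Q.eval y / (f + (f + 1) * y) ^ (2 * n + 2) :=
  psiHat_eq_poly_div_general f n
end
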